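/- (Hybrid KL reduction.) Let (Θ₁, μ₁) and (Θ₂, μ₂) be σ-finite measure spaces, let π₁₂ : Θ₁ × Θ₂ → ℝ be a probability density with respect to μ₁ ⊗ μ₂ (the joint posterior density of (θ₁, θ₂)), and let π₁(θ₁) := ∫ π₁₂(θ₁, θ₂) dμ₂(θ₂) be its marginal, with 0 < π₁(θ₁) for q-a.e. θ₁; set c(θ₂ | θ₁) := π₁₂(θ₁, θ₂) / π₁(θ₁). Let q be a probability density on Θ₁ with respect to μ₁ such that θ₁ ↦ q(θ₁) log(q(θ₁)/π₁(θ₁)) is μ₁-integrable. Then the Kullback–Leibler divergence from the hybrid density (θ₁, θ₂) ↦ q(θ₁) c(θ₂ | θ₁) to π₁₂ equals the Kullback–Leibler divergence from q to π₁: ∫∫ q(θ₁) c(θ₂|θ₁) log[ q(θ₁) c(θ₂|θ₁) / π₁₂(θ₁, θ₂) ] dμ₂ dμ₁ = ∫ q(θ₁) log[ q(θ₁) / π₁(θ₁) ] dμ₁. -/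

import Mathlib

/-!
Wherever `π₁₂ (θ₁, θ₂) ≠ 0`, the ratio `q θ₁ * c θ₁ θ₂ / π₁₂ (θ₁, θ₂)` equals `q θ₁ / π₁ θ₁`,
so the logarithm does not depend on `θ₂` and the inner integral of `c θ₁` against `μ₂` is `1`:
the two integrands agree fibre by fibre.
-/

open MeasureTheory Real

lemma mul_div_mul_log_mul_div_div (a p Z : ℝ) (hZ : Z ≠ 0) :
    a * (p / Z) * log (a * (p / Z) / p) = a / Z * log (a / Z) * p := by
  rcases eq_or_ne p 0 with rfl | hp
  · simp
  · rw [show a * (p / Z) / p = a / Z by field_simp]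
    ring

/-- If `∫ p ∂ν = 0` (including the junk case of a non-integrable `p`), both sides vanish
because `x / 0 = 0` and `log 0 = 0`. -/
lemma integral_mul_div_integral_mul_log {β : Type*} [MeasurableSpace β] (ν : Measure β)
    (p : β → ℝ) (a : ℝ) :
    ∫ y, a * (p y / ∫ y, p y ∂ν) * log (a * (p y / ∫ y, p y ∂ν) / p y) ∂ν
      = a * log (a / ∫ y, p y ∂ν) := by
  set Z := ∫ y, p y ∂ν with hZ_def
  rcases eq_or_ne Z 0 with hZ | hZ
  · simp [hZ]
  · calc ∫ y, a * (p y / Z) * log (a * (p y / Z) / p y) ∂ν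
        = ∫ y, a / Z * log (a / Z) * p y ∂ν := by
          simp only [mul_div_mul_log_mul_div_div a _ Z hZ]
      _ = a * log (a / Z) := by
          rw [integral_const_mul, ← hZ_def]
          field_simp

theorem hybrid_kl_reduction_general
    {Θ₁ Θ₂ : Type*} [MeasurableSpace Θ₁] [MeasurableSpace Θ₂]
    (μ₁ : Measure Θ₁) (μ₂ : Measure Θ₂)
    (π₁₂ : Θ₁ × Θ₂ → ℝ)
    (π₁ : Θ₁ → ℝ) (hπ₁ : π₁ = fun θ₁ => ∫ θ₂, π₁₂ (θ₁, θ₂) ∂μ₂)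
    (q : Θ₁ → ℝ)
    (c : Θ₁ → Θ₂ → ℝ) (hc : c = fun θ₁ θ₂ => π₁₂ (θ₁, θ₂) / π₁ θ₁) :
    ∫ θ₁, ∫ θ₂, q θ₁ * c θ₁ θ₂ *
        Real.log (q θ₁ * c θ₁ θ₂ / π₁₂ (θ₁, θ₂)) ∂μ₂ ∂μ₁
      = ∫ θ₁, q θ₁ * Real.log (q θ₁ / π₁ θ₁) ∂μ₁ := by
  subst hc hπ₁
  exact integral_congr_ae <| .of_forall fun θ₁ =>
    integral_mul_div_integral_mul_log μ₂ (fun θ₂ => π₁₂ (θ₁, θ₂)) (q θ₁)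

/-- Hybrid KL reduction: the KL divergence from the hybrid density
q(θ₁)·c(θ₂|θ₁) (with c the exact conditional of the joint posterior π₁₂) to π₁₂
equals the KL divergence from q to the θ₁-marginal π₁. -/
theorem hybrid_kl_reduction
    {Θ₁ Θ₂ : Type*} [MeasurableSpace Θ₁] [MeasurableSpace Θ₂]
    (μ₁ : Measure Θ₁) (μ₂ : Measure Θ₂) [SigmaFinite μ₁] [SigmaFinite μ₂]
    (π₁₂ : Θ₁ × Θ₂ → ℝ) (hmeas : Measurable π₁₂) (hnonneg : ∀ x, 0 ≤ π₁₂ x)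
    (hprob : ∫ x, π₁₂ x ∂(μ₁.prod μ₂) = 1)
    (π₁ : Θ₁ → ℝ) (hπ₁ : π₁ = fun θ₁ => ∫ θ₂, π₁₂ (θ₁, θ₂) ∂μ₂)
    (q : Θ₁ → ℝ) (hq_meas : Measurable q) (hq_nonneg : ∀ θ₁, 0 ≤ q θ₁)
    (hq_prob : ∫ θ₁, q θ₁ ∂μ₁ = 1)
    (hpos : ∀ᵐ θ₁ ∂(μ₁.withDensity fun θ₁ => ENNReal.ofReal (q θ₁)), 0 < π₁ θ₁)
    (c : Θ₁ → Θ₂ → ℝ) (hc : c = fun θ₁ θ₂ => π₁₂ (θ₁, θ₂) / π₁ θ₁)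
    (h_int : Integrable (fun θ₁ => q θ₁ * Real.log (q θ₁ / π₁ θ₁)) μ₁) :
    ∫ θ₁, ∫ θ₂, q θ₁ * c θ₁ θ₂ *
        Real.log (q θ₁ * c θ₁ θ₂ / π₁₂ (θ₁, θ₂)) ∂μ₂ ∂μ₁
      = ∫ θ₁, q θ₁ * Real.log (q θ₁ / π₁ θ₁) ∂μ₁ :=
  hybrid_kl_reduction_general μ₁ μ₂ π₁₂ π₁ hπ₁ q c hc
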